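/- arXiv:0806.4870 — 3 statements merged into one kernel-verified Lean document; each statement's English description precedes it below -/
import Mathlib

section
/- The Cayley transform R : Cⁿ ⇢ Cⁿ given by the fractional linear map associated to the matrix R = [[1/√2, 0, 1/√2],[0, I_{n-1}, 0],[-1/√2, 0, 1/√2]] maps the unit ball B = {z : ‖z‖ < 1} biholomorphically onto the generalized right half plane H = {w = (w₁, w₂) ∈ C × C^{n-1} : Re w₁ > ½ ‖w₂‖²}. -/
noncomputable section

/-- The partial Cayley transform, as the fractional linear map of the matrix
`[[1/√2, 0, 1/√2],[0, I, 0],[-1/√2, 0, 1/√2]]`, in coordinates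
`z = (z₁, z₂) ∈ ℂ × ℂ^{n-1}` : `z ↦ ((1+z₁)/(1-z₁), √2 z₂/(1-z₁))`. -/
def cayley (m : ℕ) (z : ℂ × (Fin m → ℂ)) : ℂ × (Fin m → ℂ) :=
  ((1 + z.1) / (1 - z.1), fun i => (Real.sqrt 2 : ℂ) * z.2 i / (1 - z.1))

def icayley (m : ℕ) (w : ℂ × (Fin m → ℂ)) : ℂ × (Fin m → ℂ) :=
  ((w.1 - 1) / (w.1 + 1), fun i => (Real.sqrt 2 : ℂ) * w.2 i / (w.1 + 1))

lemma sum_sq_nonneg (m : ℕ) (f : Fin m → ℂ) : 0 ≤ ∑ i, ‖f i‖ ^ 2 :=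
  Finset.sum_nonneg fun _ _ => sq_nonneg _

lemma sqrt2_sq : ((Real.sqrt 2 : ℝ) : ℂ) * ((Real.sqrt 2 : ℝ) : ℂ) = 2 := by
  rw [← Complex.ofReal_mul, Real.mul_self_sqrt (by norm_num : (0:ℝ) ≤ 2)]
  norm_num

lemma norm_term (a d : ℂ) :
    ‖(Real.sqrt 2 : ℂ) * a / d‖ ^ 2 = 2 * ‖a‖ ^ 2 / ‖d‖ ^ 2 := by
  rw [norm_div, norm_mul, Complex.norm_real, Real.norm_eq_abs,
    abs_of_nonneg (Real.sqrt_nonneg 2), div_pow, mul_pow,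
    Real.sq_sqrt (by norm_num : (0:ℝ) ≤ 2)]

lemma sum_term (m : ℕ) (f : Fin m → ℂ) (d : ℂ) :
    ∑ i, ‖(Real.sqrt 2 : ℂ) * f i / d‖ ^ 2 = 2 * (∑ i, ‖f i‖ ^ 2) / ‖d‖ ^ 2 := by
  rw [Finset.mul_sum, Finset.sum_div]
  exact Finset.sum_congr rfl fun i _ => norm_term _ _

/-- The Cayley transform maps the unit ball `B ⊂ ℂⁿ` (`n = m + 1 ≥ 2`)
biholomorphically onto the generalized right half plane
`H = {(w₁,w₂) : Re w₁ > ½‖w₂‖²}`. -/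
theorem stmt_4 (m : ℕ) (hm : 1 ≤ m)
    (B : Set (ℂ × (Fin m → ℂ))) (H : Set (ℂ × (Fin m → ℂ)))
    (hB : B = {z | ‖z.1‖ ^ 2 + ∑ i, ‖z.2 i‖ ^ 2 < 1})
    (hH : H = {w | (w.1).re > (∑ i, ‖w.2 i‖ ^ 2) / 2}) :
    Set.BijOn (cayley m) B H ∧ DifferentiableOn ℂ (cayley m) B ∧
      ∃ g : ℂ × (Fin m → ℂ) → ℂ × (Fin m → ℂ),
        Set.BijOn g H B ∧ DifferentiableOn ℂ g H ∧
        (∀ z ∈ B, g (cayley m z) = z) ∧ (∀ w ∈ H, cayley m (g w) = w) := by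
  -- denominators nonzero
  have hBd : ∀ z ∈ B, (1 : ℂ) - z.1 ≠ 0 := by
    intro z hz
    rw [hB] at hz
    simp only [Set.mem_setOf_eq] at hz
    have hS := sum_sq_nonneg m z.2
    intro h
    have hz1 : z.1 = 1 := by linear_combination -h
    rw [hz1] at hz
    simp only [norm_one, one_pow] at hz
    linarith
  have hHd : ∀ w ∈ H, w.1 + 1 ≠ 0 := by
    intro w hw
    rw [hH] at hw
    simp only [Set.mem_setOf_eq] at hw
    have hS := sum_sq_nonneg m w.2
    intro h
    have hw1 : w.1 = -1 := by linear_combination h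
    rw [hw1] at hw
    simp only [Complex.neg_re, Complex.one_re] at hw
    linarith
  -- maps to
  have hf : Set.MapsTo (cayley m) B H := by
    intro z hz
    have hd := hBd z hz
    rw [hB] at hz
    simp only [Set.mem_setOf_eq] at hz
    rw [hH]
    simp only [Set.mem_setOf_eq, cayley]
    rw [sum_term m z.2]
    have hD : (0:ℝ) < ‖(1:ℂ) - z.1‖ ^ 2 := pow_pos (norm_pos_iff.mpr hd) 2
    rw [Complex.div_re]
    have hnormSq : Complex.normSq (1 - z.1) = ‖(1:ℂ) - z.1‖ ^ 2 := by
      exact (Complex.sq_norm _).symm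
    have hre : ((1:ℂ) + z.1).re * ((1:ℂ) - z.1).re / Complex.normSq (1 - z.1)
        + ((1:ℂ) + z.1).im * ((1:ℂ) - z.1).im / Complex.normSq (1 - z.1)
        = (1 - z.1.re ^ 2 - z.1.im ^ 2) / ‖(1:ℂ) - z.1‖ ^ 2 := by
      rw [hnormSq]
      simp [Complex.add_re, Complex.sub_re, Complex.add_im, Complex.sub_im]
      ring
    rw [hre]
    have habs : ‖z.1‖ ^ 2 = z.1.re ^ 2 + z.1.im ^ 2 := by
      rw [Complex.sq_norm, Complex.normSq_apply]; ring
    rw [habs] at hz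
    have heq : (2 * ∑ i, ‖z.2 i‖ ^ 2) / ‖(1:ℂ) - z.1‖ ^ 2 / 2
        = (∑ i, ‖z.2 i‖ ^ 2) / ‖(1:ℂ) - z.1‖ ^ 2 := by ring
    rw [heq, gt_iff_lt, div_lt_div_iff₀ hD hD]
    nlinarith [sum_sq_nonneg m z.2]
  have hg : Set.MapsTo (icayley m) H B := by
    intro w hw
    have hd := hHd w hw
    rw [hH] at hw
    simp only [Set.mem_setOf_eq] at hw
    rw [hB]
    simp only [Set.mem_setOf_eq, icayley]
    rw [sum_term m w.2]
    have hD : (0:ℝ) < ‖w.1 + 1‖ ^ 2 := pow_pos (norm_pos_iff.mpr hd) 2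
    have h2 : ‖w.1 + 1‖ ^ 2 = (w.1.re + 1) ^ 2 + w.1.im ^ 2 := by
      rw [Complex.sq_norm, Complex.normSq_apply]
      simp [Complex.add_re, Complex.add_im]
      ring
    have h1 : ‖(w.1 - 1) / (w.1 + 1)‖ ^ 2
        = ((w.1.re - 1) ^ 2 + w.1.im ^ 2) / ‖w.1 + 1‖ ^ 2 := by
      rw [norm_div, div_pow]
      congr 1
      rw [Complex.sq_norm, Complex.normSq_apply]
      simp [Complex.sub_re, Complex.sub_im]
      ring
    rw [h1, ← add_div, div_lt_one hD, h2]
    rw [gt_iff_lt, div_lt_iff₀ (by norm_num : (0:ℝ) < 2)] at hw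
    nlinarith
  -- inverses
  have hgf : ∀ z ∈ B, icayley m (cayley m z) = z := by
    intro z hz
    have hd := hBd z hz
    have hd2 : (1 + z.1) / (1 - z.1) + 1 ≠ 0 := by
      rw [div_add_one hd]
      refine div_ne_zero (fun h => ?_) hd
      exact two_ne_zero (α := ℂ) (by linear_combination h)
    ext
    · simp only [icayley, cayley]
      field_simp
      ring
    · simp only [icayley, cayley]
      field_simp
      rw [sq, sqrt2_sq]
      ring
  have hfg : ∀ w ∈ H, cayley m (icayley m w) = w := by
    intro w hw
    have hd := hHd w hw
    have hd2 : (1 : ℂ) - (w.1 - 1) / (w.1 + 1) ≠ 0 := by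
      rw [sub_div' hd]
      refine div_ne_zero (fun h => ?_) hd
      exact two_ne_zero (α := ℂ) (by linear_combination h)
    ext
    · simp only [icayley, cayley]
      field_simp
      ring
    · simp only [icayley, cayley]
      field_simp
      rw [sq, sqrt2_sq]
      ring
  -- differentiability
  have hdf : DifferentiableOn ℂ (cayley m) B := by
    have ha : DifferentiableOn ℂ (fun z : ℂ × (Fin m → ℂ) => 1 + z.1) B := by fun_prop
    have hb : DifferentiableOn ℂ (fun z : ℂ × (Fin m → ℂ) => 1 - z.1) B := by fun_prop
    have h1 : DifferentiableOn ℂ (fun z : ℂ × (Fin m → ℂ) => (1 + z.1) / (1 - z.1)) B := by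
      simp only [div_eq_mul_inv]
      exact ha.mul (hb.inv hBd)
    have h2 : DifferentiableOn ℂ
        (fun z : ℂ × (Fin m → ℂ) => fun i => (Real.sqrt 2 : ℂ) * z.2 i / (1 - z.1)) B := by
      rw [differentiableOn_pi]
      intro i
      have hc : DifferentiableOn ℂ (fun z : ℂ × (Fin m → ℂ) => (Real.sqrt 2 : ℂ) * z.2 i) B := by
        fun_prop
      simp only [div_eq_mul_inv]
      exact hc.mul (hb.inv hBd)
    exact h1.prodMk h2
  have hdg : DifferentiableOn ℂ (icayley m) H := by
    have ha : DifferentiableOn ℂ (fun w : ℂ × (Fin m → ℂ) => w.1 - 1) H := by fun_prop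
    have hb : DifferentiableOn ℂ (fun w : ℂ × (Fin m → ℂ) => w.1 + 1) H := by fun_prop
    have h1 : DifferentiableOn ℂ (fun w : ℂ × (Fin m → ℂ) => (w.1 - 1) / (w.1 + 1)) H := by
      simp only [div_eq_mul_inv]
      exact ha.mul (hb.inv hHd)
    have h2 : DifferentiableOn ℂ
        (fun w : ℂ × (Fin m → ℂ) => fun i => (Real.sqrt 2 : ℂ) * w.2 i / (w.1 + 1)) H := by
      rw [differentiableOn_pi]
      intro i
      have hc : DifferentiableOn ℂ (fun w : ℂ × (Fin m → ℂ) => (Real.sqrt 2 : ℂ) * w.2 i) H := by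
        fun_prop
      simp only [div_eq_mul_inv]
      exact hc.mul (hb.inv hHd)
    exact h1.prodMk h2
  have hinv : Set.InvOn (icayley m) (cayley m) B H := ⟨fun z hz => hgf z hz, fun w hw => hfg w hw⟩
  refine ⟨hinv.bijOn hf hg, hdf, icayley m, hinv.symm.bijOn hg hf, hdg, hgf, hfg⟩

end
end

section
/- Köcher principle (abelian model case): Let n ≥ 2 and let q be holomorphic on H = {(w₁,w₂) ∈ C × C^{n-1} : Re w₁ > ½‖w₂‖²}. Suppose q is bounded on the set {w ∈ H : Δ'(w,w) = 2} (where Δ'(w,w) = 2Re w₁ - ‖w₂‖²) and satisfies q(w + iλ₀ e₁) = q(w) for some λ₀ ≠ 0. Then in the Fourier expansion q(w) = Σ_{m ∈ (1/λ₀)Z} c_m(w₂) e^{2πm w₁}, one has c_m = 0 for all m > 0 and c_0 is constant. -/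
open scoped Real
open MeasureTheory

noncomputable section

lemma koecher_coeff_bound (lam0 : ℝ) (hlam0 : lam0 ≠ 0) (c : ℤ → ℂ) (r Q : ℝ)
    (g : ℝ → ℂ)
    (hsum : Summable (fun j : ℤ => ‖c j * Complex.exp ((2 * π * ((j : ℝ) / lam0) : ℝ) * (r : ℂ))‖))
    (hg : ∀ t : ℝ, g t =
      ∑' j : ℤ, c j * Complex.exp ((2 * π * ((j : ℝ) / lam0) : ℝ) * ((r : ℂ) + Complex.I * t)))
    (hQ : ∀ t : ℝ, ‖g t‖ ≤ Q) (k : ℤ) :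
    ‖c k * Complex.exp ((2 * π * ((k : ℝ) / lam0) : ℝ) * (r : ℂ))‖ ≤ Q := by
  set μ : ℤ → ℝ := fun j => 2 * π * ((j : ℝ) / lam0) with hμ
  set s : Set ℝ := Set.Ioc (min 0 lam0) (max 0 lam0) with hs
  have hsu : Set.uIoc 0 lam0 = s := rfl
  have habs : (volume s).toReal = |lam0| := by
    rw [hs, Real.volume_Ioc,
      ENNReal.toReal_ofReal (by simp [min_le_max] : (0:ℝ) ≤ max 0 lam0 - min 0 lam0),
      max_sub_min_eq_abs]
    simp [abs_sub_comm]
  have habspos : 0 < |lam0| := abs_pos.mpr hlam0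
  set F : ℤ → ℝ → ℂ := fun j t =>
    (c j * Complex.exp ((μ j : ℂ) * (r : ℂ))) *
      Complex.exp ((Complex.I * (((μ j : ℝ) : ℂ) - ((μ k : ℝ) : ℂ))) * (t : ℂ)) with hF
  have hFeq : ∀ j t, F j t =
      (c j * Complex.exp (((μ j : ℝ) : ℂ) * ((r : ℂ) + Complex.I * t))) *
        Complex.exp (-(Complex.I * ((μ k : ℝ) : ℂ) * (t : ℂ))) := by
    intro j t
    simp only [hF, mul_assoc, ← Complex.exp_add]
    congr 2
    ring
  have hre0 : ∀ (x : ℝ) (t : ℝ), ((Complex.I * (x : ℂ)) * (t : ℂ)).re = 0 := by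
    intro x t
    simp [Complex.mul_re, Complex.mul_im]
  have hnormF : ∀ j t, ‖F j t‖ = ‖c j * Complex.exp ((μ j : ℂ) * (r : ℂ))‖ := by
    intro j t
    simp only [hF, norm_mul]
    have h1 : ‖Complex.exp ((Complex.I * (((μ j : ℝ) : ℂ) - ((μ k : ℝ) : ℂ))) * (t : ℂ))‖ = 1 := by
      rw [Complex.norm_exp]
      have : ((Complex.I * (((μ j : ℝ) : ℂ) - ((μ k : ℝ) : ℂ))) * (t : ℂ)).re = 0 := by
        rw [show (((μ j : ℝ) : ℂ) - ((μ k : ℝ) : ℂ)) = ((μ j - μ k : ℝ) : ℂ) by push_cast; ring]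
        exact hre0 _ _
      rw [this, Real.exp_zero]
    rw [h1, mul_one]
  have hFc : ∀ j, Continuous (F j) := by
    intro j
    exact continuous_const.mul
      (Complex.continuous_exp.comp (continuous_const.mul Complex.continuous_ofReal))
  have hInt : ∀ j, Integrable (F j) (volume.restrict s) := fun j =>
    (integrable_const (‖c j * Complex.exp ((μ j : ℂ) * (r : ℂ))‖ : ℝ)).mono'
      ((hFc j).aestronglyMeasurable)
      (Filter.Eventually.of_forall fun t => le_of_eq (hnormF j t))
  have hIntNorm : ∀ j, (∫ t, ‖F j t‖ ∂(volume.restrict s))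
      = ‖c j * Complex.exp ((μ j : ℂ) * (r : ℂ))‖ * |lam0| := by
    intro j
    simp only [hnormF]
    rw [integral_const, measureReal_restrict_apply_univ, measureReal_def, habs, smul_eq_mul, mul_comm]
  have hSummableInt : Summable (fun j => ∫ t, ‖F j t‖ ∂(volume.restrict s)) := by
    simp only [hIntNorm]
    exact hsum.mul_right _
  have hswap := MeasureTheory.integral_tsum_of_summable_integral_norm hInt hSummableInt
  have hpt : (fun t : ℝ => g t * Complex.exp (-(Complex.I * ((μ k : ℝ) : ℂ) * (t : ℂ))))
      = fun t => ∑' j, F j t := by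
    funext t
    rw [hg t, ← tsum_mul_right]
    exact (tsum_congr fun j => hFeq j t).symm
  have hintF : ∀ j, (∫ t, F j t ∂(volume.restrict s))
      = if j = k then (c k * Complex.exp ((μ k : ℂ) * (r : ℂ))) * ((|lam0| : ℝ) : ℂ) else 0 := by
    intro j
    by_cases hjk : j = k
    · subst hjk
      simp only [hF, sub_self, mul_zero, zero_mul, Complex.exp_zero, mul_one, eq_self_iff_true, if_true]
      rw [integral_const, measureReal_restrict_apply_univ, measureReal_def, habs, Complex.real_smul, mul_comm]
    · rw [if_neg hjk]
      have hμne : μ j ≠ μ k := by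
        intro h
        apply hjk
        have h2π : (2 * π : ℝ) ≠ 0 := by positivity
        have h1 : (j : ℝ) / lam0 = (k : ℝ) / lam0 := mul_left_cancel₀ h2π h
        field_simp [hlam0] at h1
        exact_mod_cast h1
      have hb : Complex.I * (((μ j : ℝ) : ℂ) - ((μ k : ℝ) : ℂ)) ≠ 0 :=
        mul_ne_zero Complex.I_ne_zero
          (sub_ne_zero.mpr (fun h => hμne (Complex.ofReal_inj.mp h)))
      have h0 : (∫ t in (0:ℝ)..lam0,
          Complex.exp ((Complex.I * (((μ j : ℝ) : ℂ) - ((μ k : ℝ) : ℂ))) * (t : ℂ))) = 0 := by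
        rw [integral_exp_mul_complex hb]
        have hc1 : Complex.I * (((μ j : ℝ) : ℂ) - ((μ k : ℝ) : ℂ)) * (lam0 : ℂ)
            = ((j - k : ℤ) : ℂ) * (2 * (π : ℂ) * Complex.I) := by
          have hl : (lam0 : ℂ) ≠ 0 := Complex.ofReal_ne_zero.mpr hlam0
          simp only [hμ]
          push_cast
          field_simp
        rw [hc1, Complex.exp_int_mul_two_pi_mul_I]
        simp
      have h1 := intervalIntegral.intervalIntegral_eq_integral_uIoc
        (fun t : ℝ => Complex.exp ((Complex.I * (((μ j : ℝ) : ℂ) - ((μ k : ℝ) : ℂ))) * (t : ℂ)))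
        0 lam0 volume
      rw [h0, hsu] at h1
      have h2 : (∫ t, Complex.exp ((Complex.I * (((μ j : ℝ) : ℂ) - ((μ k : ℝ) : ℂ))) * (t : ℂ))
          ∂(volume.restrict s)) = 0 := by
        rcases le_or_gt 0 lam0 with h | h
        · rw [if_pos h] at h1; simpa using h1.symm
        · rw [if_neg (not_le.mpr h)] at h1; simpa [neg_eq_zero] using h1.symm
      simp only [hF]
      rw [MeasureTheory.integral_const_mul, h2, mul_zero]
  have hmain : (c k * Complex.exp ((μ k : ℂ) * (r : ℂ))) * ((|lam0| : ℝ) : ℂ)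
      = ∫ t, g t * Complex.exp (-(Complex.I * ((μ k : ℝ) : ℂ) * (t : ℂ))) ∂(volume.restrict s) := by
    rw [hpt, ← hswap]
    simp only [hintF]
    exact (tsum_ite_eq k (fun _ => c k * Complex.exp ((μ k : ℂ) * (r : ℂ)) * ((|lam0| : ℝ) : ℂ))).symm
  haveI : IsFiniteMeasure (volume.restrict s) := by rw [hs]; infer_instance
  have hle : ‖∫ t, g t * Complex.exp (-(Complex.I * ((μ k : ℝ) : ℂ) * (t : ℂ)))
      ∂(volume.restrict s)‖ ≤ Q * |lam0| := by
    have hb : ∀ t : ℝ, ‖g t * Complex.exp (-(Complex.I * ((μ k : ℝ) : ℂ) * (t : ℂ)))‖ ≤ Q := by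
      intro t
      rw [norm_mul]
      have h1 : ‖Complex.exp (-(Complex.I * ((μ k : ℝ) : ℂ) * (t : ℂ)))‖ = 1 := by
        rw [Complex.norm_exp, Complex.neg_re, hre0, neg_zero, Real.exp_zero]
      rw [h1, mul_one]
      exact hQ t
    have := MeasureTheory.norm_integral_le_of_norm_le_const (μ := volume.restrict s)
      (f := fun t : ℝ => g t * Complex.exp (-(Complex.I * ((μ k : ℝ) : ℂ) * (t : ℂ))))
      (C := Q) (Filter.Eventually.of_forall hb)
    rwa [measureReal_restrict_apply_univ, measureReal_def, habs] at this
  rw [← hmain] at hle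
  have h3 : ‖(c k * Complex.exp ((μ k : ℂ) * (r : ℂ))) * ((|lam0| : ℝ) : ℂ)‖
      = ‖c k * Complex.exp ((μ k : ℂ) * (r : ℂ))‖ * |lam0| := by
    rw [norm_mul, Complex.norm_real, Real.norm_eq_abs, abs_abs]
  rw [h3] at hle
  exact le_of_mul_le_mul_right hle habspos


/-- Köcher principle (abelian model case): let `n = m + 1 ≥ 2` and `q` be
holomorphic on `H = {Re w₁ > ½‖w₂‖²}`, bounded on `{Δ'(w,w) = 2}`, and
periodic: `q(w + iλ₀e₁) = q(w)`, `λ₀ ≠ 0`.  Then in the Fourier expansion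
`q(w) = Σ_{m ∈ (1/λ₀)ℤ} c_m(w₂) e^{2πm w₁}` one has `c_m = 0` for all
`m > 0`, and `c_0` is constant. -/
theorem stmt_12 (m : ℕ) (hm : 1 ≤ m)
    (H : Set (ℂ × (Fin m → ℂ)))
    (hH : H = {w | w.1.re > (∑ k, ‖w.2 k‖ ^ 2) / 2})
    (q : ℂ × (Fin m → ℂ) → ℂ) (hq : DifferentiableOn ℂ q H)
    (Q : ℝ)
    (hbdd : ∀ w ∈ H, 2 * w.1.re - ∑ k, ‖w.2 k‖ ^ 2 = 2 → ‖q w‖ ≤ Q)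
    (lam0 : ℝ) (hlam0 : lam0 ≠ 0)
    (hper : ∀ w ∈ H, q (w.1 + Complex.I * (lam0 : ℂ), w.2) = q w)
    (c : ℤ → (Fin m → ℂ) → ℂ)
    (hc : ∀ j : ℤ, Differentiable ℂ (c j))
    (hexp : ∀ w ∈ H,
      Summable (fun j : ℤ =>
        ‖c j w.2 * Complex.exp ((2 * π * ((j : ℝ) / lam0) : ℝ) * w.1)‖) ∧
      q w = ∑' j : ℤ, c j w.2 * Complex.exp ((2 * π * ((j : ℝ) / lam0) : ℝ) * w.1)) :
    (∀ j : ℤ, (j : ℝ) / lam0 > 0 → ∀ u, c j u = 0) ∧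
    (∃ a : ℂ, ∀ u, c 0 u = a) := by
  have hlc : ∀ (k : ℤ) (u : Fin m → ℂ),
      ‖c k u‖ * Real.exp (2 * π * ((k : ℝ) / lam0) * (1 + (∑ j, ‖u j‖ ^ 2) / 2)) ≤ Q := by
    intro k u
    set S : ℝ := ∑ j, ‖u j‖ ^ 2 with hSdef
    have hS0 : 0 ≤ S := Finset.sum_nonneg fun _ _ => sq_nonneg _
    set r : ℝ := 1 + S / 2 with hrdef
    have hre : ∀ t : ℝ, ((r : ℂ) + Complex.I * (t : ℂ)).re = r := by
      intro t
      simp [Complex.add_re, Complex.mul_re]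
    have hmem : ∀ t : ℝ, ((r : ℂ) + Complex.I * (t : ℂ), u) ∈ H := by
      intro t
      rw [hH]
      simp only [Set.mem_setOf_eq]
      rw [hre]
      rw [← hSdef, hrdef]
      linarith
    have hmem0 : ((r : ℂ), u) ∈ H := by
      rw [hH]
      simp only [Set.mem_setOf_eq, Complex.ofReal_re]
      rw [← hSdef, hrdef]
      linarith
    have hb := koecher_coeff_bound lam0 hlam0 (fun j => c j u) r Q
      (fun t => q ((r : ℂ) + Complex.I * (t : ℂ), u))
      ((hexp _ hmem0).1)
      (fun t => (hexp _ (hmem t)).2)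
      (fun t => hbdd _ (hmem t) (by
        rw [hre, ← hSdef, hrdef]
        ring))
      k
    have heq : ‖c k u * Complex.exp (((2 * π * ((k : ℝ) / lam0) : ℝ) : ℂ) * (r : ℂ))‖
        = ‖c k u‖ * Real.exp (2 * π * ((k : ℝ) / lam0) * r) := by
      rw [norm_mul, ← Complex.ofReal_mul]
      rw [Complex.norm_exp, Complex.ofReal_re]
    rw [heq] at hb
    exact hb
  have hconst : ∀ k : ℤ, 0 ≤ (k : ℝ) / lam0 → ∀ u, c k u = c k 0 := by
    intro k hk u
    have hbdd' : ∀ v, ‖c k v‖ ≤ Q := by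
      intro v
      have h1 := hlc k v
      have hv0 : (0:ℝ) ≤ ∑ j, ‖v j‖ ^ 2 := Finset.sum_nonneg fun _ _ => sq_nonneg _
      have hE : 1 ≤ Real.exp (2 * π * ((k : ℝ) / lam0) * (1 + (∑ j, ‖v j‖ ^ 2) / 2)) := by
        apply Real.one_le_exp
        apply mul_nonneg (mul_nonneg (by positivity) hk)
        linarith
      calc ‖c k v‖ ≤ ‖c k v‖ * Real.exp (2 * π * ((k : ℝ) / lam0) * (1 + (∑ j, ‖v j‖ ^ 2) / 2)) :=
            le_mul_of_one_le_right (norm_nonneg _) hE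
        _ ≤ Q := h1
    have hrange : Bornology.IsBounded (Set.range (c k)) :=
      isBounded_iff_forall_norm_le.mpr ⟨Q, by rintro x ⟨v, rfl⟩; exact hbdd' v⟩
    exact (hc k).apply_eq_apply_of_bounded hrange u 0
  refine ⟨?_, ⟨c 0 0, fun u => hconst 0 (by simp) u⟩⟩
  intro j hj u
  rw [hconst j (le_of_lt hj) u]
  have hbt : ∀ t : ℝ, ‖c j 0‖
      ≤ Q / Real.exp (2 * π * ((j : ℝ) / lam0) * (1 + (m : ℝ) * t ^ 2 / 2)) := by
    intro t
    have h1 := hlc j (fun _ => (t : ℂ))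
    rw [hconst j (le_of_lt hj) (fun _ => (t : ℂ))] at h1
    have h2 : (∑ i : Fin m, ‖((t : ℝ) : ℂ)‖ ^ 2) = (m : ℝ) * t ^ 2 := by
      simp [Finset.sum_const, Finset.card_univ, nsmul_eq_mul, Real.norm_eq_abs, sq_abs]
    rw [h2] at h1
    rw [le_div_iff₀ (Real.exp_pos _)]
    exact h1
  have hT : Filter.Tendsto (fun t : ℝ => 2 * π * ((j : ℝ) / lam0) * (1 + (m : ℝ) * t ^ 2 / 2))
      Filter.atTop Filter.atTop := by
    apply Filter.Tendsto.const_mul_atTop (mul_pos (by positivity) hj)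
    apply Filter.tendsto_atTop_add_const_left
    apply Filter.Tendsto.atTop_div_const (by norm_num : (0:ℝ) < 2)
    apply Filter.Tendsto.const_mul_atTop
      (by exact_mod_cast Nat.pos_of_ne_zero (by omega) : (0:ℝ) < (m : ℝ))
    exact Filter.tendsto_pow_atTop two_ne_zero
  have hT2 : Filter.Tendsto
      (fun t : ℝ => Q / Real.exp (2 * π * ((j : ℝ) / lam0) * (1 + (m : ℝ) * t ^ 2 / 2)))
      Filter.atTop (nhds 0) :=
    Filter.Tendsto.div_atTop tendsto_const_nhds (Real.tendsto_exp_atTop.comp hT)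
  have hfin : ‖c j 0‖ ≤ 0 := ge_of_tendsto' hT2 hbt
  exact norm_le_zero_iff.mp hfin

end
end

section
/- For an iλ₀e₁-twisted-periodic holomorphic q on H with Fourier expansion q(w) = Σ_m c_m(w₂)e^{2πm w₁}, the coefficient bound |c_m(w₂) e^{2πm w₁}| ≤ sup_{Δ'(v,v)=2} |q(v)| holds for every w with Δ'(w,w) = 2, for all m; consequently, taking w = (1 + ½u*u, u), one gets |c_m(u)| ≤ ‖q‖_{∞,{Δ'=2}} · e^{-πm(2 + ‖u‖²)} ≤ ‖q‖_∞ e^{-πm‖u‖²} for all u ∈ C^{n-1}. -/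
open scoped Real

noncomputable section

/-- Coefficient bound for the Fourier expansion of a twisted-periodic
holomorphic `q` on `H = {Re w₁ > ½‖w₂‖²}` (`n = m + 1 ≥ 2`): if the Fourier
coefficient `c = c_M` satisfies the integral formula
`c(w₂)e^{2πM w₁} = (1/λ₀)∫₀^{λ₀} q(w + iλe₁)e^{-2πiMλ} dλ`, then
`|c(w₂)e^{2πM w₁}| ≤ sup_{Δ'(v,v)=2}|q(v)|` on `{Δ'(w,w) = 2}`, hence
`|c(u)| ≤ ‖q‖_∞ e^{-πM(2+‖u‖²)}`, and for `M ≥ 0` also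
`|c(u)| ≤ ‖q‖_∞ e^{-πM‖u‖²}`. -/
theorem stmt_13 (m : ℕ) (hm : 1 ≤ m)
    (H : Set (ℂ × (Fin m → ℂ)))
    (hH : H = {w | w.1.re > (∑ k, ‖w.2 k‖ ^ 2) / 2})
    (q : ℂ × (Fin m → ℂ) → ℂ) (hq : DifferentiableOn ℂ q H)
    (lam0 α : ℝ) (hlam0 : lam0 ≠ 0)
    (hper : ∀ w ∈ H, q (w.1 + Complex.I * (lam0 : ℂ), w.2) =
      Complex.exp (2 * (π : ℂ) * Complex.I * (α : ℂ)) * q w)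
    (M : ℝ) (hM : ∃ j : ℤ, M = ((j : ℝ) - α) / lam0)
    (c : (Fin m → ℂ) → ℂ)
    (hint : ∀ w ∈ H,
      c w.2 * Complex.exp ((2 * π * M : ℝ) * w.1) =
        (1 / lam0 : ℂ) * ∫ lam in (0 : ℝ)..lam0,
          q (w.1 + Complex.I * (lam : ℂ), w.2) *
            Complex.exp (-2 * (π : ℂ) * Complex.I * (M * lam : ℝ)))
    (Q : ℝ)
    (hbdd : ∀ v ∈ H, 2 * v.1.re - ∑ k, ‖v.2 k‖ ^ 2 = 2 → ‖q v‖ ≤ Q) :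
    (∀ w ∈ H, 2 * w.1.re - ∑ k, ‖w.2 k‖ ^ 2 = 2 →
      ‖c w.2 * Complex.exp ((2 * π * M : ℝ) * w.1)‖ ≤ Q) ∧
    (∀ u : Fin m → ℂ,
      ‖c u‖ ≤ Q * Real.exp (-π * M * (2 + ∑ k, ‖u k‖ ^ 2))) ∧
    (0 ≤ M → ∀ u : Fin m → ℂ,
      ‖c u‖ ≤ Q * Real.exp (-π * M * ∑ k, ‖u k‖ ^ 2)) := by
  have hQ0 : 0 ≤ Q := by
    have h1 : ((1:ℂ), (0 : Fin m → ℂ)) ∈ H := by simp [hH]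
    have := hbdd ((1:ℂ), (0 : Fin m → ℂ)) h1 (by simp)
    exact le_trans (norm_nonneg _) this
  have key : ∀ w ∈ H, 2 * w.1.re - ∑ k, ‖w.2 k‖ ^ 2 = 2 →
      ‖c w.2 * Complex.exp ((2 * π * M : ℝ) * w.1)‖ ≤ Q := by
    intro w hw hΔ
    rw [hint w hw, norm_mul]
    have hb : ∀ lam ∈ Set.uIoc (0:ℝ) lam0,
        ‖q (w.1 + Complex.I * (lam : ℂ), w.2) *
          Complex.exp (-2 * (π : ℂ) * Complex.I * (M * lam : ℝ))‖ ≤ Q := by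
      intro lam _
      rw [norm_mul]
      have hre : (w.1 + Complex.I * (lam : ℂ)).re = w.1.re := by simp
      have hmem : (w.1 + Complex.I * (lam : ℂ), w.2) ∈ H := by
        rw [hH] at hw ⊢
        simpa [hre] using hw
      have h2 : ‖q (w.1 + Complex.I * (lam : ℂ), w.2)‖ ≤ Q := by
        apply hbdd _ hmem
        simpa [hre] using hΔ
      have h3 : ‖Complex.exp (-2 * (π : ℂ) * Complex.I * (M * lam : ℝ))‖ = 1 := by
        rw [Complex.norm_exp]
        simp
      rw [h3, mul_one]; exact h2
    have hI := intervalIntegral.norm_integral_le_of_norm_le_const hb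
    have h4 : ‖(1 / lam0 : ℂ)‖ = 1 / |lam0| := by
      simp
    rw [h4]
    calc 1 / |lam0| * ‖∫ lam in (0:ℝ)..lam0,
          q (w.1 + Complex.I * (lam : ℂ), w.2) *
            Complex.exp (-2 * (π : ℂ) * Complex.I * (M * lam : ℝ))‖
        ≤ 1 / |lam0| * (Q * |lam0 - 0|) := by
          apply mul_le_mul_of_nonneg_left hI
          positivity
      _ = Q := by
          rw [sub_zero]
          field_simp [abs_ne_zero.mpr hlam0]
  have part2 : ∀ u : Fin m → ℂ,
      ‖c u‖ ≤ Q * Real.exp (-π * M * (2 + ∑ k, ‖u k‖ ^ 2)) := by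
    intro u
    set S : ℝ := ∑ k, ‖u k‖ ^ 2 with hS
    have hS0 : 0 ≤ S := by positivity
    have hmem : (((1 + S / 2 : ℝ) : ℂ), u) ∈ H := by
      rw [hH]
      simp only [Set.mem_setOf_eq, Complex.ofReal_re]
      linarith
    have hΔ : 2 * (((1 + S / 2 : ℝ) : ℂ)).re - ∑ k, ‖u k‖ ^ 2 = 2 := by
      simp only [Complex.ofReal_re, ← hS]; ring
    have hk := key (((1 + S / 2 : ℝ) : ℂ), u) hmem hΔ
    rw [norm_mul] at hk
    have hexp : ‖Complex.exp ((2 * π * M : ℝ) * (((1 + S / 2 : ℝ) : ℂ)))‖ =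
        Real.exp (2 * π * M * (1 + S / 2)) := by
      rw [← Complex.ofReal_mul, Complex.norm_exp]
      simp
    rw [hexp] at hk
    have hpos : 0 < Real.exp (2 * π * M * (1 + S / 2)) := Real.exp_pos _
    have h5 : ‖c u‖ ≤ Q / Real.exp (2 * π * M * (1 + S / 2)) := by
      rw [le_div_iff₀ hpos]; exact hk
    calc ‖c u‖ ≤ Q / Real.exp (2 * π * M * (1 + S / 2)) := h5
      _ = Q * Real.exp (-π * M * (2 + S)) := by
          rw [div_eq_iff (ne_of_gt hpos), mul_assoc, ← Real.exp_add]
          have he : -π * M * (2 + S) + 2 * π * M * (1 + S / 2) = 0 := by ring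
          rw [he, Real.exp_zero, mul_one]
  refine ⟨key, part2, ?_⟩
  intro hMpos u
  refine le_trans (part2 u) ?_
  apply mul_le_mul_of_nonneg_left _ hQ0
  apply Real.exp_le_exp.mpr
  have hS0 : (0:ℝ) ≤ ∑ k, ‖u k‖ ^ 2 := by positivity
  nlinarith [Real.pi_pos]

end
end
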